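/- Assume (RDQ) holds. Then the integral along the diagonal of the kernel K(z,w) := (ν/π)ⁿ e^{ν⟨z,w⟩} ∑_{γ∈Γ} χ(γ) e^{−(ν/2)|γ|² + ν(⟨z,γ⟩ − conj(⟨w,γ⟩))} against the Gaussian weight equals ∫_{Λ(Γ)} K(z,z) e^{−ν|z|²} dm(z) = (ν/π)ⁿ vol(ℂⁿ/Γ). -/

import Mathlib

open MeasureTheory Complex

noncomputable section

/-- Hermitian form ⟨z,w⟩ = ∑ zⱼ conj(wⱼ) on ℂⁿ. -/
def herm {n : ℕ} (z w : Fin n → ℂ) : ℂ := ∑ j, z j * (starRingEnd ℂ) (w j)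

/-- Symplectic form ω(z,w) = Im⟨z,w⟩. -/
def symp {n : ℕ} (z w : Fin n → ℂ) : ℝ := (herm z w).im

/-- Squared Euclidean norm |z|². -/
def absq {n : ℕ} (z : Fin n → ℂ) : ℝ := ∑ j, Complex.normSq (z j)

/-- The (Γ,χ)-periodized Bargmann–Fock kernel
K(z,w) = (ν/π)ⁿ e^{ν⟨z,w⟩} ∑_{γ∈Γ} χ(γ) e^{-(ν/2)|γ|² + ν(⟨z,γ⟩ - conj⟨w,γ⟩)}. -/
def thetaKer {n : ℕ} (ν : ℝ) (Γ : AddSubgroup (Fin n → ℂ)) (χ : Γ → ℂ)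
    (z w : Fin n → ℂ) : ℂ :=
  ((ν / Real.pi) ^ n : ℝ) * Complex.exp ((ν : ℂ) * herm z w) *
    ∑' γ : Γ, χ γ * Complex.exp (((-(ν / 2) * absq (γ : Fin n → ℂ) : ℝ) : ℂ) +
      (ν : ℂ) * (herm z (γ : Fin n → ℂ) - (starRingEnd ℂ) (herm w (γ : Fin n → ℂ))))

/-!
On the diagonal the Gaussian weight cancels `e^{ν⟨z,z⟩}`, and the `γ`-th term of the kernel becomes
`χ(γ) e^{-(ν/2)|γ|²} e^{2iν ω(z,γ)}`. The factors `z ↦ e^{2iν ω(z,γ)}` are unimodular additive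
characters and the coefficients are absolutely summable, so the integral over the fundamental
domain may be taken term by term. Comparing (RDQ) for `(γ₁, γ₂)` and `(γ₂, γ₁)` shows that each of
these characters is trivial on `Γ`; a `Γ`-periodic character that is not identically `1` has
integral `0` over a fundamental domain, since translating the domain multiplies the integral by a
value `≠ 1`. Only `γ = 0` survives, and it contributes `χ(0) vol(Λ) = vol(Λ)`.
-/

open Pointwise in
theorem MeasureTheory.IsAddFundamentalDomain.setIntegral_addChar_eq_zero {E : Type*}
    [AddCommGroup E] [MeasurableSpace E] [MeasurableAdd E] {μ : Measure E} [μ.IsAddLeftInvariant]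
    {Γ : AddSubgroup E} [Countable Γ] {s : Set E} (hs : IsAddFundamentalDomain Γ s μ)
    (ψ : AddChar E ℂ) (hψΓ : ∀ γ ∈ Γ, ψ γ = 1) {v : E} (hv : ψ v ≠ 1) :
    ∫ x in s, ψ x ∂μ = 0 := by
  have hshift : ∫ x in s, ψ x ∂μ = ψ v * ∫ x in s, ψ x ∂μ :=
    calc ∫ x in s, ψ x ∂μ
        = ∫ x in v +ᵥ s, ψ x ∂μ :=
          hs.setIntegral_eq (hs.vadd_of_comm v) fun γ x => by
            rw [AddSubgroup.vadd_def, vadd_eq_add, AddChar.map_add_eq_mul, hψΓ _ γ.2, one_mul]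
      _ = ∫ x in s, ψ (v + x) ∂μ := by
          rw [← Set.image_vadd]
          exact (measurePreserving_vadd v μ).setIntegral_image_emb
            (measurableEmbedding_const_vadd _) _ _
      _ = ψ v * ∫ x in s, ψ x ∂μ := by
          simp_rw [AddChar.map_add_eq_mul]
          exact integral_const_mul _ _
  have : (1 - ψ v) * ∫ x in s, ψ x ∂μ = 0 := by linear_combination hshift
  exact (mul_eq_zero.mp this).resolve_left (sub_ne_zero.mpr hv.symm)

lemma integral_tsum_mul_of_norm_le_one {α ι : Type*} [MeasurableSpace α] [Countable ι]
    {μ : Measure α} [IsFiniteMeasure μ] {c : ι → ℂ} (hc : Summable fun i => ‖c i‖)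
    {e : ι → α → ℂ} (he_meas : ∀ i, AEStronglyMeasurable (e i) μ) (he : ∀ i x, ‖e i x‖ ≤ 1) :
    ∫ x, ∑' i, c i * e i x ∂μ = ∑' i, c i * ∫ x, e i x ∂μ := by
  have he_int (i : ι) : Integrable (e i) μ := .of_bound (he_meas i) 1 (.of_forall (he i))
  have hbound (i : ι) : ∫ x, ‖c i * e i x‖ ∂μ ≤ ‖c i‖ * μ.real Set.univ := by
    calc ∫ x, ‖c i * e i x‖ ∂μ ≤ ∫ _, ‖c i‖ ∂μ :=
          integral_mono ((he_int i).const_mul (c i)).norm (integrable_const _) fun x => by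
            simpa [norm_mul] using mul_le_of_le_one_right (norm_nonneg (c i)) (he i x)
      _ = ‖c i‖ * μ.real Set.univ := by rw [integral_const, smul_eq_mul, mul_comm]
  simp_rw [← integral_const_mul]
  exact (integral_tsum_of_summable_integral_norm (fun i => (he_int i).const_mul (c i))
    (.of_nonneg_of_le (fun i => integral_nonneg fun x => norm_nonneg _) hbound
      (hc.mul_right _))).symm

section Forms

variable {n : ℕ}

lemma herm_add_left (a b c : Fin n → ℂ) : herm (a + b) c = herm a c + herm b c := by
  simp [herm, add_mul, Finset.sum_add_distrib]

lemma herm_smul_left (c : ℂ) (z w : Fin n → ℂ) : herm (c • z) w = c * herm z w := by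
  simp [herm, Finset.mul_sum, mul_assoc]

lemma herm_comm (z w : Fin n → ℂ) : herm w z = starRingEnd ℂ (herm z w) := by
  simp [herm, mul_comm]

lemma herm_self (z : Fin n → ℂ) : herm z z = absq z := by
  simp [herm, Complex.mul_conj, absq]

@[simp] lemma herm_zero_left (w : Fin n → ℂ) : herm 0 w = 0 := by
  simp [herm]

@[simp] lemma herm_zero_right (z : Fin n → ℂ) : herm z 0 = 0 := by
  simp [herm]

lemma symp_add_left (a b c : Fin n → ℂ) : symp (a + b) c = symp a c + symp b c := by
  simp [symp, herm_add_left]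

lemma symp_comm (z w : Fin n → ℂ) : symp w z = -symp z w := by
  rw [symp, herm_comm, conj_im, symp]

lemma symp_I_smul_self (c : ℝ) (z : Fin n → ℂ) : symp (((c : ℂ) * I) • z) z = c * absq z := by
  simp [symp, herm_smul_left, herm_self]

lemma herm_sub_conj_herm (z w : Fin n → ℂ) :
    herm z w - starRingEnd ℂ (herm z w) = ((2 * symp z w : ℝ) : ℂ) * I := by
  rw [sub_conj, symp]

lemma absq_pos {z : Fin n → ℂ} (hz : z ≠ 0) : 0 < absq z := by
  obtain ⟨j, hj⟩ := Function.ne_iff.mp hz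
  exact Finset.sum_pos' (fun i _ => normSq_nonneg (z i)) ⟨j, Finset.mem_univ j, normSq_pos.mpr hj⟩

@[simp] lemma absq_zero : absq (0 : Fin n → ℂ) = 0 := by
  simp [absq]

end Forms

def sympChar {n : ℕ} (ν : ℝ) (γ : Fin n → ℂ) : AddChar (Fin n → ℂ) ℂ where
  toFun z := exp (((2 * ν * symp z γ : ℝ) : ℂ) * I)
  map_zero_eq_one' := by simp [symp]
  map_add_eq_mul' a b := by rw [← exp_add, symp_add_left]; push_cast; ring_nf

section SympChar

variable {n : ℕ} (ν : ℝ) (γ : Fin n → ℂ)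

lemma sympChar_apply (z : Fin n → ℂ) :
    sympChar ν γ z = exp (((2 * ν * symp z γ : ℝ) : ℂ) * I) := rfl

lemma norm_sympChar (z : Fin n → ℂ) : ‖sympChar ν γ z‖ = 1 :=
  norm_exp_ofReal_mul_I _

@[simp] lemma sympChar_zero_right (z : Fin n → ℂ) : sympChar ν 0 z = 1 := by
  simp [sympChar_apply, symp]

lemma continuous_sympChar : Continuous (sympChar ν γ) := by
  show Continuous fun z : Fin n → ℂ => exp (((2 * ν * symp z γ : ℝ) : ℂ) * I)
  unfold symp herm
  fun_prop

end SympChar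

lemma exists_sympChar_ne_one {n : ℕ} {ν : ℝ} (hν : ν ≠ 0) {γ : Fin n → ℂ} (hγ : γ ≠ 0) :
    ∃ v, sympChar ν γ v ≠ 1 := by
  have hpos := absq_pos hγ
  refine ⟨((Real.pi / (2 * ν * absq γ) : ℝ) * I : ℂ) • γ, ?_⟩
  have : 2 * ν * symp ((((Real.pi / (2 * ν * absq γ) : ℝ) : ℂ) * I) • γ) γ = Real.pi := by
    rw [symp_I_smul_self]; field_simp
  rw [sympChar_apply, this, exp_pi_mul_I]
  norm_num

section RDQ

variable {n : ℕ} {ν : ℝ} {Γ : AddSubgroup (Fin n → ℂ)} {χ : Γ → ℂ}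

lemma map_zero_eq_one_of_rdq (hχ : ∀ γ, χ γ ≠ 0)
    (hRDQ : ∀ γ₁ γ₂ : Γ, χ (γ₁ + γ₂) = χ γ₁ * χ γ₂ *
        Complex.exp (Complex.I * ν * symp (γ₁ : Fin n → ℂ) (γ₂ : Fin n → ℂ))) :
    χ 0 = 1 := by
  have h := hRDQ 0 0
  simp only [add_zero, ZeroMemClass.coe_zero, symp, herm_zero_right, zero_im, ofReal_zero,
    mul_zero, exp_zero, mul_one] at h
  exact (mul_eq_left₀ (hχ 0)).mp h.symm

lemma sympChar_eq_one_of_rdq (hχ : ∀ γ, χ γ ≠ 0)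
    (hRDQ : ∀ γ₁ γ₂ : Γ, χ (γ₁ + γ₂) = χ γ₁ * χ γ₂ *
        Complex.exp (Complex.I * ν * symp (γ₁ : Fin n → ℂ) (γ₂ : Fin n → ℂ)))
    (γ₁ γ₂ : Γ) : sympChar ν (γ₂ : Fin n → ℂ) γ₁ = 1 := by
  have h := hRDQ γ₂ γ₁
  rw [add_comm, hRDQ, mul_comm (χ γ₁), symp_comm] at h
  have h' := mul_left_cancel₀ (mul_ne_zero (hχ γ₂) (hχ γ₁)) h
  set s := symp (γ₂ : Fin n → ℂ) γ₁
  have hs : symp (γ₁ : Fin n → ℂ) γ₂ = -s := symp_comm _ _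
  calc sympChar ν (γ₂ : Fin n → ℂ) γ₁
      = exp (I * ν * ((-s : ℝ) : ℂ)) * exp (I * ν * ((-s : ℝ) : ℂ)) := by
        rw [sympChar_apply, ← exp_add, hs]; push_cast; ring_nf
    _ = exp (I * ν * ((-s : ℝ) : ℂ)) * exp (I * ν * s) := by rw [h']
    _ = 1 := by rw [← exp_add]; push_cast; ring_nf; exact exp_zero

end RDQ

lemma thetaKer_diag_mul_gaussian {n : ℕ} (ν : ℝ) (Γ : AddSubgroup (Fin n → ℂ)) (χ : Γ → ℂ)
    (z : Fin n → ℂ) :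
    thetaKer ν Γ χ z z * ((Real.exp (-ν * absq z) : ℝ) : ℂ) =
      ((ν / Real.pi) ^ n : ℝ) * ∑' γ : Γ,
        χ γ * exp ((-(ν / 2) * absq (γ : Fin n → ℂ) : ℝ) : ℂ) * sympChar ν γ z := by
  have hweight : exp (ν * herm z z) * ((Real.exp (-ν * absq z) : ℝ) : ℂ) = 1 := by
    rw [herm_self, ofReal_exp, ← exp_add]; push_cast; ring_nf; exact exp_zero
  have hterm (γ : Γ) : χ γ * exp (((-(ν / 2) * absq (γ : Fin n → ℂ) : ℝ) : ℂ) +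
      ν * (herm z γ - starRingEnd ℂ (herm z γ))) =
      χ γ * exp ((-(ν / 2) * absq (γ : Fin n → ℂ) : ℝ) : ℂ) * sympChar ν γ z := by
    rw [herm_sub_conj_herm, sympChar_apply, mul_assoc, ← exp_add]; push_cast; ring_nf
  rw [thetaKer, tsum_congr hterm]
  linear_combination (((ν / Real.pi) ^ n : ℝ) * ∑' γ : Γ,
    χ γ * exp ((-(ν / 2) * absq (γ : Fin n → ℂ) : ℝ) : ℂ) * sympChar ν γ z) * hweight

theorem integral_thetaKer_diag_mul_gaussian {n : ℕ} {ν : ℝ} (hν : ν ≠ 0)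
    {Γ : AddSubgroup (Fin n → ℂ)} [Countable Γ] {s : Set (Fin n → ℂ)}
    (hs : IsAddFundamentalDomain Γ s volume) (hs_fin : volume s ≠ ⊤)
    {χ : Γ → ℂ} (hχ : ∀ γ, χ γ ≠ 0)
    (hRDQ : ∀ γ₁ γ₂ : Γ, χ (γ₁ + γ₂) = χ γ₁ * χ γ₂ *
        Complex.exp (Complex.I * ν * symp (γ₁ : Fin n → ℂ) (γ₂ : Fin n → ℂ)))
    (hsum : Summable fun γ : Γ => χ γ * exp ((-(ν / 2) * absq (γ : Fin n → ℂ) : ℝ) : ℂ)) :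
    ∫ z in s, thetaKer ν Γ χ z z * ((Real.exp (-ν * absq z) : ℝ) : ℂ) =
      (((ν / Real.pi) ^ n * volume.real s : ℝ) : ℂ) := by
  have : IsFiniteMeasure (volume.restrict s) := isFiniteMeasure_restrict.mpr hs_fin
  have hvanish (γ : Γ) (hγ : γ ≠ 0) : ∫ z in s, sympChar ν γ z = 0 := by
    obtain ⟨v, hv⟩ := exists_sympChar_ne_one hν (γ := (γ : Fin n → ℂ)) (by simpa using hγ)
    exact hs.setIntegral_addChar_eq_zero (sympChar ν γ)
      (fun lam hlam => sympChar_eq_one_of_rdq hχ hRDQ ⟨lam, hlam⟩ γ) hv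
  simp_rw [thetaKer_diag_mul_gaussian]
  rw [integral_const_mul, integral_tsum_mul_of_norm_le_one (summable_norm_iff.mpr hsum)
    (fun γ => (continuous_sympChar ν (γ : Fin n → ℂ)).aestronglyMeasurable)
    (fun γ z => (norm_sympChar ν (γ : Fin n → ℂ) z).le),
    tsum_eq_single 0 fun γ hγ => by rw [hvanish γ hγ, mul_zero]]
  simp [map_zero_eq_one_of_rdq hχ hRDQ, Measure.real]

/-- The diagonal Gaussian integral of the periodized kernel over a fundamental domain
equals (ν/π)ⁿ vol(ℂⁿ/Γ). -/
theorem stmt_11 {n : ℕ} (ν : ℝ) (hν : 0 < ν)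
    (b : Module.Basis (Fin (2 * n)) ℝ (Fin n → ℂ))
    (χ : (Submodule.span ℤ (Set.range b)).toAddSubgroup → ℂ) (hχ : ∀ γ, ‖χ γ‖ = 1)
    (hRDQ : ∀ γ₁ γ₂ : (Submodule.span ℤ (Set.range b)).toAddSubgroup,
      χ (γ₁ + γ₂) = χ γ₁ * χ γ₂ *
        Complex.exp (Complex.I * ν * symp (γ₁ : Fin n → ℂ) (γ₂ : Fin n → ℂ)))
    (hsum : ∀ z w : Fin n → ℂ,
      Summable fun γ : (Submodule.span ℤ (Set.range b)).toAddSubgroup =>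
        χ γ * Complex.exp (((-(ν / 2) * absq (γ : Fin n → ℂ) : ℝ) : ℂ) +
          (ν : ℂ) * (herm z (γ : Fin n → ℂ) - (starRingEnd ℂ) (herm w (γ : Fin n → ℂ))))) :
    (∫ z in ZSpan.fundamentalDomain b,
        thetaKer ν (Submodule.span ℤ (Set.range b)).toAddSubgroup χ z z *
          ((Real.exp (-ν * absq z) : ℝ) : ℂ)) =
      ((((ν / Real.pi) ^ n * (volume (ZSpan.fundamentalDomain b)).toReal : ℝ)) : ℂ) := by
  have : Countable (Submodule.span ℤ (Set.range b)).toAddSubgroup :=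
    inferInstanceAs (Countable (Submodule.span ℤ (Set.range b)))
  exact integral_thetaKer_diag_mul_gaussian hν.ne' (ZSpan.isAddFundamentalDomain' b volume)
    (ZSpan.fundamentalDomain_isBounded b).measure_lt_top.ne
    (fun γ => norm_ne_zero_iff.mp (by simp [hχ])) hRDQ ((hsum 0 0).congr fun γ => by simp)
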